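/- For every ξ > 0, all m entries of the column vector (exp(−ξA) − I)^{−1} B are strictly positive. -/

import Mathlib

open Matrix NormedSpace

/-- The `m×m` matrix with diagonal entries `-a i`, subdiagonal entries `g i`, zero elsewhere. -/
def igoA (m : ℕ) (a : Fin m → ℝ) (g : Fin (m - 1) → ℝ) : Matrix (Fin m) (Fin m) ℝ :=
  fun i j =>
    if i = j then -a i
    else if h : (i : ℕ) = (j : ℕ) + 1 then g ⟨(j : ℕ), by have := i.isLt; omega⟩
    else 0

/-- The first standard basis vector `e₁` of `ℝ^m`. -/
def igoB (m : ℕ) : Fin m → ℝ := fun i => if (i : ℕ) = 0 then 1 else 0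

/-!
Let `P = exp (ξ A)`. It is lower triangular with diagonal entries `exp (-ξ aᵢ) < 1`, and it is
strictly positive on and below the diagonal: `ξ A + c I` is entrywise nonnegative for large `c`
and has a positive subdiagonal, so its powers reach every entry below the diagonal, and
`exp (ξ A) = exp (-c) exp (ξ A + c I)`.
Since `exp (-ξ A) = P⁻¹`, the vector `x = (P⁻¹ - I)⁻¹ e₁` solves `(I - P) x = P e₁`, the first
column of `P`, which is positive. As `I - P` is lower triangular with positive diagonal and
nonpositive off-diagonal entries, forward substitution shows `x > 0` one entry at a time.
-/
namespace Matrix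

open scoped Nat

variable {n : Type*} [Fintype n] [DecidableEq n]

theorem hasSum_exp_apply (M : Matrix n n ℝ) (i j : n) :
    HasSum (fun k : ℕ => (k !⁻¹ : ℝ) * (M ^ k) i j) (exp M i j) := by
  open scoped Norms.Operator in
  have h := NormedSpace.exp_series_hasSum_exp' (𝕂 := ℝ) M
  exact Pi.hasSum.mp (Pi.hasSum.mp h i) j

theorem inv_factorial_mul_pow_apply_le_exp_apply {M : Matrix n n ℝ} (hM : ∀ i j, 0 ≤ M i j)
    (k : ℕ) (i j : n) : (k !⁻¹ : ℝ) * (M ^ k) i j ≤ exp M i j :=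
  le_hasSum (hasSum_exp_apply M i j) k fun l _ =>
    mul_nonneg (by positivity) (pow_apply_nonneg hM l i j)

theorem exp_eq_exp_neg_smul_exp_add_smul_one (M : Matrix n n ℝ) (c : ℝ) :
    exp M = Real.exp (-c) • exp (M + c • 1) := by
  have hcomm : Commute ((-c) • (1 : Matrix n n ℝ)) (M + c • 1) :=
    (Commute.one_left _).smul_left _
  have hexp : exp ((-c) • (1 : Matrix n n ℝ)) = Real.exp (-c) • 1 := by
    rw [smul_one_eq_diagonal, exp_diagonal, smul_one_eq_diagonal, Real.exp_eq_exp_ℝ]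
    congr 1
    exact Pi.exp_def _
  rw [← smul_one_mul, ← hexp, ← exp_add_of_commute _ _ hcomm]
  rw [neg_smul, neg_add_cancel_comm_assoc]

theorem IsLowerTriangular.pow_apply_self {R : Type*} [Semiring R] [LinearOrder n]
    {M : Matrix n n R}
    (hM : M.IsLowerTriangular) (k : ℕ) (i : n) : (M ^ k) i i = M i i ^ k := by
  induction k with
  | zero => simp
  | succ k ih =>
    rw [pow_succ, pow_succ, mul_apply, ← ih, Finset.sum_eq_single i]
    intro l _ hli
    rcases lt_or_gt_of_ne hli with h | h
    · rw [hM (OrderDual.toDual_lt_toDual.mpr h), mul_zero]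
    · rw [(hM.pow k) (OrderDual.toDual_lt_toDual.mpr h), zero_mul]
    · simp

theorem IsLowerTriangular.exp_apply_self [LinearOrder n] {M : Matrix n n ℝ}
    (hM : M.IsLowerTriangular) (i : n) : exp M i i = Real.exp (M i i) := by
  refine (hasSum_exp_apply M i i).unique ?_
  simp_rw [hM.pow_apply_self, Real.exp_eq_exp_ℝ, ← smul_eq_mul]
  exact NormedSpace.exp_series_hasSum_exp' (M i i)

theorem IsLowerTriangular.pos_of_mulVec_pos [LinearOrder n] {T : Matrix n n ℝ}
    (hT : T.IsLowerTriangular) (hdiag : ∀ i, 0 < T i i) (hoff : ∀ i j, i ≠ j → T i j ≤ 0)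
    {x : n → ℝ} (hx : ∀ i, 0 < (T *ᵥ x) i) (i : n) : 0 < x i := by
  induction i using WellFoundedLT.induction with
  | _ i ih =>
  have hle : (T *ᵥ x) i ≤ T i i * x i := by
    rw [mulVec, dotProduct, ← Finset.add_sum_erase _ _ (Finset.mem_univ i)]
    refine add_le_of_nonpos_right (Finset.sum_nonpos fun j hj => ?_)
    rcases lt_or_gt_of_ne (Finset.ne_of_mem_erase hj) with h | h
    · exact mul_nonpos_of_nonpos_of_nonneg (hoff i j h.ne') (ih j h).le
    · rw [hT (OrderDual.toDual_lt_toDual.mpr h), zero_mul]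
  exact pos_of_mul_pos_right ((hx i).trans_le hle) (hdiag i).le

theorem IsLowerTriangular.inv_sub_one_inv_mulVec_pos [LinearOrder n] {P : Matrix n n ℝ}
    (hP : P.IsLowerTriangular) (hpos : ∀ i j, j ≤ i → 0 < P i j) (hdiag : ∀ i, P i i < 1)
    {b : n → ℝ} (hb : ∀ i, 0 < (P *ᵥ b) i) (i : n) : 0 < ((P⁻¹ - 1)⁻¹ *ᵥ b) i := by
  have hT : (1 - P).IsLowerTriangular := blockTriangular_one.sub hP
  have hTdiag : ∀ i, 0 < (1 - P) i i := fun i => by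
    simpa [sub_apply, one_apply_eq] using hdiag i
  have hTdet : IsUnit (1 - P).det := by
    rw [det_of_isLowerTriangular _ hT]
    exact (Finset.prod_pos fun i _ => hTdiag i).ne'.isUnit
  have hPdet : IsUnit P.det := by
    rw [det_of_isLowerTriangular _ hP]
    exact (Finset.prod_pos fun i _ => hpos i i le_rfl).ne'.isUnit
  have hsolve : (1 - P) *ᵥ ((P⁻¹ - 1)⁻¹ *ᵥ b) = P *ᵥ b := by
    have hfactor : P⁻¹ - 1 = P⁻¹ * (1 - P) := by rw [mul_sub, mul_one, nonsing_inv_mul _ hPdet]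
    rw [hfactor, mul_inv_rev, nonsing_inv_nonsing_inv _ hPdet, mulVec_mulVec, ← mul_assoc,
      mul_nonsing_inv _ hTdet, one_mul]
  refine hT.pos_of_mulVec_pos hTdiag (fun i j hij => ?_) (hsolve ▸ hb) i
  rw [sub_apply, one_apply_ne hij, zero_sub, neg_nonpos]
  rcases le_or_gt j i with h | h
  · exact (hpos i j h).le
  · exact (hP (OrderDual.toDual_lt_toDual.mpr h)).ge

section Subdiagonal

variable {m : ℕ} {M : Matrix (Fin m) (Fin m) ℝ}

theorem pow_apply_pos_of_subdiag (hM : ∀ i j, 0 ≤ M i j)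
    (hsub : ∀ i j : Fin m, (i : ℕ) = j + 1 → 0 < M i j) (k : ℕ) :
    ∀ i j : Fin m, (i : ℕ) = j + k → 0 < (M ^ k) i j := by
  induction k with
  | zero =>
    intro i j hij
    rw [Fin.ext (by omega : (i : ℕ) = j), pow_zero, one_apply_eq]
    exact one_pos
  | succ k ih =>
    intro i j hij
    let l : Fin m := ⟨j + k, by omega⟩
    have hl : 0 < M i l * (M ^ k) l j := mul_pos (hsub i l (by simp [l]; omega)) (ih l j rfl)
    rw [pow_succ', mul_apply]
    exact hl.trans_le <| Finset.single_le_sum (f := fun l => M i l * (M ^ k) l j)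
      (fun l _ => mul_nonneg (hM i l) (pow_apply_nonneg hM k l j)) (Finset.mem_univ l)

theorem exp_apply_pos_of_subdiag (hM : ∀ i j, 0 ≤ M i j)
    (hsub : ∀ i j : Fin m, (i : ℕ) = j + 1 → 0 < M i j) {i j : Fin m} (hij : j ≤ i) :
    0 < exp M i j :=
  have hpow : 0 < (M ^ (i - j : ℕ)) i j :=
    pow_apply_pos_of_subdiag hM hsub _ i j (by have : (j : ℕ) ≤ i := hij; omega)
  (mul_pos (by positivity) hpow).trans_le (inv_factorial_mul_pow_apply_le_exp_apply hM _ i j)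

theorem exp_apply_pos_of_metzler (hM : ∀ i j, i ≠ j → 0 ≤ M i j)
    (hsub : ∀ i j : Fin m, (i : ℕ) = j + 1 → 0 < M i j) {i j : Fin m} (hij : j ≤ i) :
    0 < exp M i j := by
  set c := ∑ k, |M k k|
  have hshift_apply : ∀ i j, (M + c • 1) i j = M i j + c * (1 : Matrix (Fin m) (Fin m) ℝ) i j :=
    fun i j => rfl
  have hnonneg : ∀ i j, 0 ≤ (M + c • 1) i j := by
    intro i j
    rcases eq_or_ne i j with rfl | h
    · have : |M i i| ≤ c := Finset.single_le_sum (fun k _ => abs_nonneg (M k k)) (Finset.mem_univ i)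
      rw [hshift_apply, one_apply_eq, mul_one]
      linarith [neg_abs_le (M i i)]
    · rw [hshift_apply, one_apply_ne h, mul_zero, add_zero]
      exact hM i j h
  have hsub' : ∀ i j : Fin m, (i : ℕ) = j + 1 → 0 < (M + c • 1) i j := by
    intro i j h
    rw [hshift_apply, one_apply_ne (by rintro rfl; omega), mul_zero, add_zero]
    exact hsub i j h
  rw [exp_eq_exp_neg_smul_exp_add_smul_one M c, smul_apply, smul_eq_mul]
  exact mul_pos (Real.exp_pos _) (exp_apply_pos_of_subdiag hnonneg hsub' hij)

end Subdiagonal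

end Matrix

section IgoA

variable {m : ℕ} (a : Fin m → ℝ) (g : Fin (m - 1) → ℝ)

theorem igoA_isLowerTriangular : (igoA m a g).IsLowerTriangular := by
  intro i j (h : i < j)
  have : (i : ℕ) ≠ j + 1 := by have : (i : ℕ) < j := h; omega
  simp [igoA, h.ne, this]

theorem igoA_apply_self (i : Fin m) : igoA m a g i i = -a i := if_pos rfl

variable {g}

theorem igoA_apply_nonneg_of_ne (hg : ∀ i, 0 ≤ g i) {i j : Fin m} (hij : i ≠ j) :
    0 ≤ igoA m a g i j := by
  unfold igoA
  split_ifs with h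
  · exact absurd h hij
  · exact hg _
  · exact le_rfl

theorem igoA_apply_pos_of_eq_succ (hg : ∀ i, 0 < g i) {i j : Fin m} (hij : (i : ℕ) = j + 1) :
    0 < igoA m a g i j := by
  rw [igoA, if_neg (by rintro rfl; omega), dif_pos hij]
  exact hg _

theorem igoB_eq_single (hm : 0 < m) : igoB m = Pi.single ⟨0, hm⟩ 1 := by
  ext i
  simp [igoB, Pi.single_apply, Fin.ext_iff]

end IgoA

theorem stmt3_general (m : ℕ) (a : Fin m → ℝ) (g : Fin (m - 1) → ℝ)
    (ha : ∀ i, 0 < a i) (hg : ∀ i, 0 < g i) (ξ : ℝ) (hξ : 0 < ξ) :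
    ∀ i, 0 < ((NormedSpace.exp (-ξ • igoA m a g) - 1)⁻¹ :
      Matrix (Fin m) (Fin m) ℝ).mulVec (igoB m) i := by
  intro i
  have hlow : (ξ • igoA m a g).IsLowerTriangular := fun i j h => by
    rw [Matrix.smul_apply, igoA_isLowerTriangular a g h, smul_zero]
  have hpos : ∀ i j, j ≤ i → 0 < exp (ξ • igoA m a g) i j := fun i j hij =>
    exp_apply_pos_of_metzler
      (fun i j h => smul_nonneg hξ.le (igoA_apply_nonneg_of_ne a (fun k => (hg k).le) h))
      (fun i j h => smul_pos hξ (igoA_apply_pos_of_eq_succ a hg h)) hij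
  have hdiag : ∀ i, exp (ξ • igoA m a g) i i < 1 := fun i => by
    rw [hlow.exp_apply_self, Matrix.smul_apply, igoA_apply_self, smul_eq_mul, Real.exp_lt_one_iff,
      mul_neg, neg_lt_zero]
    exact mul_pos hξ (ha i)
  have hcol : ∀ i, 0 < (exp (ξ • igoA m a g) *ᵥ igoB m) i := fun j => by
    rw [igoB_eq_single i.pos, mulVec_single_one]
    exact hpos j _ (Nat.zero_le _)
  rw [neg_smul, Matrix.exp_neg]
  exact IsLowerTriangular.inv_sub_one_inv_mulVec_pos hlow.exp hpos hdiag hcol i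

theorem stmt3 (m : ℕ) (hm : 1 ≤ m) (a : Fin m → ℝ) (g : Fin (m - 1) → ℝ)
    (ha : ∀ i, 0 < a i) (hg : ∀ i, 0 < g i) (ξ : ℝ) (hξ : 0 < ξ) :
    ∀ i, 0 < ((NormedSpace.exp (-ξ • igoA m a g) - 1)⁻¹ :
      Matrix (Fin m) (Fin m) ℝ).mulVec (igoB m) i :=
  stmt3_general m a g ha hg ξ hξ
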